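/- The multivariate Rogers-Szegő polynomials satisfy the recursion H_{n+1}(t_1,...,t_{m-1}) = Σ_{i=0}^{m-1} e_{i+1}(t_1,...,t_{m-1},1) · (-1)^i · ((q)_n / (q)_{n-i}) · H_{n-i}(t_1,...,t_{m-1}) for n ≥ m-1, where e_{i+1} denotes the (i+1)-st elementary symmetric polynomial in m variables. -/

import Mathlib

/-- `(q)_n = (1-q)(1-q^2)⋯(1-q^n)`, with `(q)_0 = 1`. -/
noncomputable def qPoch {K : Type*} [Field K] (q : K) (n : ℕ) : K :=
  ∏ j ∈ Finset.range n, (1 - q ^ (j + 1))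

/-- The Rogers-Szegő polynomial in `m-1` variables:
`H_n(t_1,…,t_{m-1}) = Σ_{k_1+⋯+k_m=n} C(n; k_1,…,k_m)_q t_1^{k_1}⋯t_{m-1}^{k_{m-1}}`. -/
noncomputable def rogersSzegoMV {K : Type*} [Field K] (q : K) (m n : ℕ)
    (t : Fin (m - 1) → K) : K :=
  ∑ k ∈ Finset.Nat.antidiagonalTuple m n,
    (qPoch q n / ∏ i, qPoch q (k i)) *
      ∏ i : Fin (m - 1), t i ^ k (Fin.castLE (Nat.sub_le m 1) i)

/-! Appending the variable `t_m = 1`, the series `∑ₙ Hₙ zⁿ / (q)ₙ` is the product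
`F(z) = ∏ⱼ e_q(tⱼ z)` of `q`-exponentials `e_q(z) = ∑ₖ zᵏ / (q)ₖ`. Each factor satisfies
`(1 - t z) e_q(t z) = e_q(q t z)`, hence `∏ⱼ (1 - tⱼ z) · F(z) = F(q z)`. Expanding
`∏ⱼ (1 - tⱼ z) = ∑ᵢ (-1)ⁱ eᵢ zⁱ` and comparing coefficients of `z^(n+1)` gives
`(1 - q^(n+1)) H_{n+1} / (q)_{n+1} = ∑ᵢ (-1)ⁱ e_{i+1} H_{n-i} / (q)_{n-i}`, a sum that stops at
`i = m - 1` because `e_{i+1}` vanishes on `m` variables beyond that. -/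

open Finset PowerSeries

namespace Multiset

variable {R : Type*} [CommSemiring R]

theorem esymm_zero (s : Multiset R) : s.esymm 0 = 1 := by
  simp [esymm]

theorem esymm_eq_zero_of_card_lt {s : Multiset R} {i : ℕ} (h : card s < i) : s.esymm i = 0 := by
  simp [esymm, powersetCard_eq_empty _ h]

theorem esymm_cons_succ (a : R) (s : Multiset R) (i : ℕ) :
    (a ::ₘ s).esymm (i + 1) = s.esymm (i + 1) + a * s.esymm i := by
  simp [esymm, powersetCard_cons, map_map, sum_map_mul_left]

end Multiset

namespace PowerSeries

variable {R : Type*} [CommRing R]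

theorem coeff_prod_one_sub_C_mul_X (s : Multiset R) (i : ℕ) :
    coeff i (s.map fun a => 1 - C a * X).prod = (-1) ^ i * s.esymm i := by
  induction s using Multiset.induction_on generalizing i with
  | empty =>
    cases i with
    | zero => simp [Multiset.esymm_zero]
    | succ i => simp [coeff_one, Multiset.esymm_eq_zero_of_card_lt (s := 0) i.succ_pos]
  | cons a s ih =>
    cases i with
    | zero => simpa [Multiset.esymm_zero] using ih 0
    | succ i =>
      simp only [Multiset.map_cons, Multiset.prod_cons, sub_mul, one_mul, mul_assoc, map_sub,
        coeff_C_mul, coeff_succ_X_mul, ih, Multiset.esymm_cons_succ]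
      ring

theorem coeff_prod_fin {m : ℕ} (f : Fin m → R⟦X⟧) (n : ℕ) :
    coeff n (∏ j, f j) = ∑ k ∈ Finset.Nat.antidiagonalTuple m n, ∏ j, coeff (k j) (f j) := by
  rw [coeff_prod, ← piAntidiag_univ_fin_eq_antidiagonalTuple]
  refine sum_nbij' (⇑) Finsupp.equivFunOnFinite.symm ?_ ?_ ?_ ?_ ?_ <;> intro k hk <;> simp_all

end PowerSeries

theorem Finset.Nat.sum_antidiagonal_eq_sum_range_of_eq_zero {M : Type*} [AddCommMonoid M]
    {f : ℕ × ℕ → M} {m n : ℕ} (hmn : m ≤ n + 1) (hf : ∀ i j, m ≤ i → f (i, j) = 0) :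
    ∑ p ∈ antidiagonal n, f p = ∑ i ∈ range m, f (i, n - i) := by
  rw [Finset.Nat.sum_antidiagonal_eq_sum_range_succ_mk]
  refine (sum_subset (range_subset_range.2 hmn) fun i _ hi => hf _ _ ?_).symm
  simpa using hi

theorem Polynomial.not_isOfFinOrder_X {R : Type*} [CommRing R] [Nontrivial R] :
    ¬IsOfFinOrder (Polynomial.X : Polynomial R) := by
  rw [isOfFinOrder_iff_pow_eq_one]
  rintro ⟨k, hk, h⟩
  simpa [hk.ne'] using congrArg Polynomial.natDegree h

theorem RatFunc.not_isOfFinOrder_X {K : Type*} [Field K] :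
    ¬IsOfFinOrder (RatFunc.X : RatFunc K) := by
  rw [← RatFunc.algebraMap_X]
  exact ((RatFunc.algebraMap_injective K).isOfFinOrder_iff
    (f := (algebraMap (Polynomial K) (RatFunc K) : Polynomial K →* RatFunc K))).not.mpr
    Polynomial.not_isOfFinOrder_X

section

variable {K : Type*} [Field K] {q : K}

theorem qPoch_succ (q : K) (n : ℕ) : qPoch q (n + 1) = qPoch q n * (1 - q ^ (n + 1)) :=
  prod_range_succ _ n

theorem one_sub_pow_ne_zero_of_not_isOfFinOrder (hq : ¬IsOfFinOrder q) {k : ℕ} (hk : 0 < k) :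
    1 - q ^ k ≠ 0 :=
  fun h => hq (isOfFinOrder_iff_pow_eq_one.mpr ⟨k, hk, (sub_eq_zero.mp h).symm⟩)

theorem qPoch_ne_zero (hq : ¬IsOfFinOrder q) (n : ℕ) : qPoch q n ≠ 0 :=
  prod_ne_zero_iff.mpr fun j _ => one_sub_pow_ne_zero_of_not_isOfFinOrder hq j.succ_pos

noncomputable def qExp (q t : K) : K⟦X⟧ :=
  mk fun k => t ^ k / qPoch q k

theorem one_sub_C_mul_X_mul_qExp (hq : ¬IsOfFinOrder q) (t : K) :
    (1 - C t * X) * qExp q t = rescale q (qExp q t) := by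
  ext (_ | n)
  · simp [qExp, qPoch]
  · have hn := one_sub_pow_ne_zero_of_not_isOfFinOrder hq n.succ_pos
    have hP := qPoch_ne_zero hq n
    simp only [sub_mul, one_mul, mul_assoc, map_sub, coeff_C_mul, coeff_succ_X_mul,
      coeff_rescale, qExp, coeff_mk, qPoch_succ]
    field_simp
    ring

theorem prod_one_sub_C_mul_X_mul_prod_qExp (hq : ¬IsOfFinOrder q) {ι : Type*} (s : Finset ι)
    (t : ι → K) :
    (∏ i ∈ s, (1 - C (t i) * X)) * ∏ i ∈ s, qExp q (t i) = rescale q (∏ i ∈ s, qExp q (t i)) := by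
  simp_rw [map_prod, ← one_sub_C_mul_X_mul_qExp hq, prod_mul_distrib]

theorem rogersSzegoMV_succ_eq_qPoch_mul_coeff (q : K) {m : ℕ} (t : Fin m → K) (n : ℕ) :
    rogersSzegoMV q (m + 1) n t =
      qPoch q n * coeff n (∏ j, qExp q ((Fin.snoc t 1 : Fin (m + 1) → K) j)) := by
  rw [rogersSzegoMV, coeff_prod_fin, mul_sum]
  refine sum_congr rfl fun k _ => ?_
  simp only [qExp, coeff_mk, prod_div_distrib]
  rw [Fin.prod_univ_castSucc (f := fun j => (Fin.snoc t 1 : Fin (m + 1) → K) j ^ k j)]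
  simp only [Fin.snoc_castSucc, Fin.snoc_last, one_pow, mul_one]
  rw [div_mul_eq_mul_div, mul_div_assoc]
  rfl -- `Fin.castLE` and `Fin.castSucc` agree definitionally

theorem coeff_prod_qExp_succ (hq : ¬IsOfFinOrder q) {m : ℕ} (s : Fin m → K) (n : ℕ) :
    (1 - q ^ (n + 1)) * coeff (n + 1) (∏ j, qExp q (s j)) =
      ∑ p ∈ antidiagonal n,
        (-1) ^ p.1 * (univ.val.map s).esymm (p.1 + 1) * coeff p.2 (∏ j, qExp q (s j)) := by
  have hP (i : ℕ) : coeff i (∏ j, (1 - C (s j) * X)) = (-1) ^ i * (univ.val.map s).esymm i := by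
    rw [← coeff_prod_one_sub_C_mul_X, Multiset.map_map]
    rfl
  have hcoeff := congrArg (coeff (n + 1)) (prod_one_sub_C_mul_X_mul_prod_qExp hq univ s)
  simp only [coeff_mul, Finset.Nat.sum_antidiagonal_succ, coeff_rescale, hP, pow_succ,
    mul_neg_one, neg_mul, sum_neg_distrib, pow_zero, one_mul, Multiset.esymm_zero] at hcoeff
  linear_combination hcoeff

theorem rogersSzegoMV_succ (hq : ¬IsOfFinOrder q) (m n : ℕ) (hn : m - 1 ≤ n)
    (t : Fin (m - 1) → K) :
    rogersSzegoMV q m (n + 1) t =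
      ∑ i ∈ range m, (1 ::ₘ univ.val.map t).esymm (i + 1) * (-1) ^ i *
        (qPoch q n / qPoch q (n - i)) * rogersSzegoMV q m (n - i) t := by
  cases m with
  | zero => simp [rogersSzegoMV]
  | succ m =>
    have hs : univ.val.map (Fin.snoc t 1 : Fin (m + 1) → K) = 1 ::ₘ univ.val.map t := by
      rw [Fin.univ_castSuccEmb]
      simp
    rw [rogersSzegoMV_succ_eq_qPoch_mul_coeff, qPoch_succ, mul_assoc, coeff_prod_qExp_succ hq,
      hs, Finset.Nat.sum_antidiagonal_eq_sum_range_of_eq_zero (m := m + 1) (by omega), mul_sum]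
    · refine sum_congr rfl fun i _ => ?_
      rw [rogersSzegoMV_succ_eq_qPoch_mul_coeff]
      field_simp [qPoch_ne_zero hq]
    · intro i j hi
      rw [Multiset.esymm_eq_zero_of_card_lt (by simpa), mul_zero, zero_mul]

end

theorem rogersSzegoMV_recursion_general (m n : ℕ) (hn : m - 1 ≤ n)
    (t : Fin (m - 1) → RatFunc ℚ) :
    rogersSzegoMV (RatFunc.X : RatFunc ℚ) m (n + 1) t =
      ∑ i ∈ Finset.range m,
        (Multiset.esymm (1 ::ₘ Multiset.map t Finset.univ.val) (i + 1)) * (-1 : RatFunc ℚ) ^ i *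
          (qPoch (RatFunc.X : RatFunc ℚ) n / qPoch (RatFunc.X : RatFunc ℚ) (n - i)) *
          rogersSzegoMV (RatFunc.X : RatFunc ℚ) m (n - i) t :=
  rogersSzegoMV_succ RatFunc.not_isOfFinOrder_X m n hn t

/-- `H_{n+1}(t_1,…,t_{m-1}) = Σ_{i=0}^{m-1} e_{i+1}(t_1,…,t_{m-1},1) (-1)^i
((q)_n/(q)_{n-i}) H_{n-i}(t_1,…,t_{m-1})` for `n ≥ m-1`, where `e_{i+1}` is the
`(i+1)`-st elementary symmetric polynomial in `m` variables. -/
theorem rogersSzegoMV_recursion (m n : ℕ) (hm : 2 ≤ m) (hn : m - 1 ≤ n)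
    (t : Fin (m - 1) → RatFunc ℚ) :
    rogersSzegoMV (RatFunc.X : RatFunc ℚ) m (n + 1) t =
      ∑ i ∈ Finset.range m,
        (Multiset.esymm (1 ::ₘ Multiset.map t Finset.univ.val) (i + 1)) * (-1 : RatFunc ℚ) ^ i *
          (qPoch (RatFunc.X : RatFunc ℚ) n / qPoch (RatFunc.X : RatFunc ℚ) (n - i)) *
          rogersSzegoMV (RatFunc.X : RatFunc ℚ) m (n - i) t :=
  rogersSzegoMV_recursion_general m n hn t
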